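/- Let G be a (C4,C5)-free well-covered graph and x a vertex of G. Then x is codominated if and only if there exists no independent set I in G − N_G[x] such that x is an isolated vertex of G − N_G[I]. -/

import Mathlib

open SimpleGraph

variable {V : Type*}

/-- The closed neighborhood `N_G[x]` of a vertex. -/
def closedNbhd (G : SimpleGraph V) (x : V) : Set V := insert x (G.neighborSet x)

/-- `x` is codominated: some `y ≠ x` has `N_G[y] ⊆ N_G[x]`. -/
def Codominated (G : SimpleGraph V) (x : V) : Prop :=
  ∃ y, y ≠ x ∧ closedNbhd G y ⊆ closedNbhd G x

/-- `S` is an independent set of `G`. -/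
def IsIndep (G : SimpleGraph V) (S : Set V) : Prop :=
  ∀ ⦃u⦄, u ∈ S → ∀ ⦃v⦄, v ∈ S → ¬ G.Adj u v

/-- `x` is a shedding vertex of `G`: every independent set of `G - N_G[x]`
extends by a neighbor of `x`. -/
def SheddingVertex (G : SimpleGraph V) (x : V) : Prop :=
  ∀ S : Set V, S ⊆ (closedNbhd G x)ᶜ → IsIndep G S →
    ∃ v ∈ G.neighborSet x, IsIndep G (insert v S)

/-- The closed neighborhood `N_G[I]` of a set of vertices. -/
def closedNbhdSet (G : SimpleGraph V) (I : Set V) : Set V :=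
  I ∪ {v | ∃ u ∈ I, G.Adj u v}

/-- `x` is codominated in the subgraph of `G` induced on `A`. -/
def CodominatedOn (G : SimpleGraph V) (A : Finset V) (x : V) : Prop :=
  ∃ y ∈ A, y ≠ x ∧ ∀ z ∈ A, (z = y ∨ G.Adj y z) → (z = x ∨ G.Adj x z)

/-- The subgraph of `G` induced on `A` is codismantlable. -/
def CodismantlableOn (G : SimpleGraph V) [DecidableEq V] (A : Finset V) : Prop :=
  (∀ x ∈ A, ∀ y ∈ A, ¬ G.Adj x y) ∨
    ∃ x, ∃ h : x ∈ A, CodominatedOn G A x ∧ CodismantlableOn G (A.erase x)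
termination_by A.card
decreasing_by exact Finset.card_erase_lt_of_mem h

/-- `G` is codismantlable. -/
def Codismantlable (G : SimpleGraph V) [Fintype V] [DecidableEq V] : Prop :=
  CodismantlableOn G Finset.univ

/-- A maximal independent set of `G`. -/
def MaxIndep (G : SimpleGraph V) (S : Set V) : Prop :=
  IsIndep G S ∧ ∀ T : Set V, IsIndep G T → S ⊆ T → S = T

/-- `G` is well-covered: all maximal independent sets have the same size. -/
def WellCovered (G : SimpleGraph V) : Prop :=
  ∀ S T : Set V, MaxIndep G S → MaxIndep G T → S.ncard = T.ncard

/-- `G` has no induced cycle of length `n`. -/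
def CycleFree (G : SimpleGraph V) (n : ℕ) : Prop :=
  IsEmpty (cycleGraph n ↪g G)

/-- `G` is chordal: no induced cycle of length at least 4. -/
def Chordal (G : SimpleGraph V) : Prop :=
  ∀ n, 4 ≤ n → CycleFree G n

/-- `M` is a matching of `G` (as a set of edges). -/
def IsMatchingSet (G : SimpleGraph V) (M : Finset (Sym2 V)) : Prop :=
  (∀ e ∈ M, e ∈ G.edgeSet) ∧
    ∀ e ∈ M, ∀ f ∈ M, e ≠ f → ∀ v : V, v ∈ e → v ∉ f

/-- `M` is an induced matching of `G`. -/
def IsInducedMatching (G : SimpleGraph V) (M : Finset (Sym2 V)) : Prop :=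
  IsMatchingSet G M ∧
    ∀ e ∈ M, ∀ f ∈ M, e ≠ f → ∀ u : V, u ∈ e → ∀ v : V, v ∈ f → ¬ G.Adj u v

/-- The matching number `m(G)`. -/
noncomputable def matchNum (G : SimpleGraph V) : ℕ :=
  sSup {n | ∃ M : Finset (Sym2 V), IsMatchingSet G M ∧ M.card = n}

/-- The induced matching number `im(G)`. -/
noncomputable def indMatchNum (G : SimpleGraph V) : ℕ :=
  sSup {n | ∃ M : Finset (Sym2 V), IsInducedMatching G M ∧ M.card = n}

open Classical in
/-- The vertices of `A` outside the closed neighborhood of `x`. -/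
noncomputable def delNbhd (G : SimpleGraph V) [DecidableEq V] (A : Finset V) (x : V) : Finset V :=
  A.filter (fun z => ¬(z = x ∨ G.Adj x z))

/-- `x` is a shedding vertex of the subgraph of `G` induced on `A`. -/
def SheddingOn (G : SimpleGraph V) (A : Finset V) (x : V) : Prop :=
  ∀ S : Set V, S ⊆ ↑A → (∀ u ∈ S, ¬(u = x ∨ G.Adj x u)) → IsIndep G S →
    ∃ v ∈ A, G.Adj x v ∧ IsIndep G (insert v S)

lemma delNbhd_ssubset (G : SimpleGraph V) [DecidableEq V] {A : Finset V} {x : V}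
    (h : x ∈ A) : delNbhd G A x ⊂ A := by
  classical
  refine (Finset.ssubset_iff_of_subset (Finset.filter_subset _ _)).mpr ⟨x, h, ?_⟩
  simp [delNbhd]

/-- The subgraph of `G` induced on `A` is vertex decomposable. -/
noncomputable def VertexDecomposableOn (G : SimpleGraph V) [DecidableEq V] (A : Finset V) :
    Prop :=
  (∀ x ∈ A, ∀ y ∈ A, ¬ G.Adj x y) ∨
    ∃ x, ∃ h : x ∈ A, SheddingOn G A x ∧ VertexDecomposableOn G (A.erase x) ∧
      VertexDecomposableOn G (delNbhd G A x)
termination_by A.card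
decreasing_by
  · exact Finset.card_erase_lt_of_mem h
  · exact Finset.card_lt_card (delNbhd_ssubset G h)

/-- `G` is vertex decomposable. -/
noncomputable def VertexDecomposable (G : SimpleGraph V) [Fintype V] [DecidableEq V] : Prop :=
  VertexDecomposableOn G Finset.univ

/-- The restriction of `G` to `A` codismantles to its restriction to `B`. -/
inductive CodisTo (G : SimpleGraph V) [DecidableEq V] : Finset V → Finset V → Prop
  | refl (A : Finset V) : CodisTo G A A
  | step {A B : Finset V} {x : V} (h : x ∈ A) (hc : CodominatedOn G A x)
      (ht : CodisTo G (A.erase x) B) : CodisTo G A B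

/-- `L` is a codismantling sequence for the subgraph of `G` induced on `A`. -/
def CodisSeq (G : SimpleGraph V) [DecidableEq V] : Finset V → List V → Prop
  | A, [] => ∀ x ∈ A, ∀ y ∈ A, ¬ G.Adj x y
  | A, x :: xs => x ∈ A ∧ CodominatedOn G A x ∧ CodisSeq G (A.erase x) xs

/-- `C` is a vertex cover of `G`. -/
def IsVertexCover (G : SimpleGraph V) (C : Set V) : Prop :=
  ∀ ⦃u v : V⦄, G.Adj u v → u ∈ C ∨ v ∈ C

/-- The co-chordal cover number: the minimum number of co-chordal subgraphs of `G`
covering all edges of `G`. -/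
noncomputable def cochord (G : SimpleGraph V) : ℕ :=
  sInf {k | ∃ H : Fin k → G.Subgraph, (∀ i, Chordal ((H i).coeᶜ)) ∧
    ∀ e ∈ G.edgeSet, ∃ i, e ∈ (H i).edgeSet}

/-- The domination number of a graph. -/
noncomputable def domNum {W : Type*} (K : SimpleGraph W) : ℕ :=
  sInf {n | ∃ D : Finset W, (∀ v : W, v ∈ D ∨ ∃ u ∈ D, K.Adj u v) ∧ D.card = n}

/-! If `y ≠ x` has `N[y] ⊆ N[x]`, no independent set outside `N[x]` dominates `y`. Conversely,
if `x` is not codominated, take an independent set `I` of `G - N[x]` dominating an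
inclusion-maximal set of neighbours of `x`. Were a neighbour `v` of `x` undominated, pick
`z ∈ N(v) \ N[x]` and pass to `{z} ∪ (I \ N(z))`: it dominates `v`, and it still dominates every
neighbour `w` of `x` that some `u ∈ I` dominated, since otherwise `v z u w` would be an induced
`C4` or `x v z u w` an induced `C5`. -/

section CodominatedIff

variable {G : SimpleGraph V} {x v z : V} {S I : Set V}

lemma not_cycleFree_four {a b c d : V}
    (hab : G.Adj a b) (hbc : G.Adj b c) (hcd : G.Adj c d) (hda : G.Adj d a)
    (hac : ¬ G.Adj a c) (hbd : ¬ G.Adj b d) (hac' : a ≠ c) (hbd' : b ≠ d) :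
    ¬ CycleFree G 4 := by
  intro h
  have := hab.ne; have := hbc.ne; have := hcd.ne; have := hda.ne
  have hca := mt G.adj_symm hac; have hdb := mt G.adj_symm hbd
  refine h.elim ⟨⟨![a, b, c, d], ?_⟩, ?_⟩
  · intro i j hij
    fin_cases i <;> fin_cases j <;> simp_all
  · intro i j
    change G.Adj (![a, b, c, d] i) (![a, b, c, d] j) ↔ _
    fin_cases i <;> fin_cases j <;>
      simp [cycleGraph_adj, hab, hbc, hcd, hda, hac, hbd, hca, hdb, hab.symm, hbc.symm,
        hcd.symm, hda.symm] <;> decide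

lemma not_cycleFree_five {a b c d e : V}
    (hab : G.Adj a b) (hbc : G.Adj b c) (hcd : G.Adj c d) (hde : G.Adj d e) (hea : G.Adj e a)
    (hac : ¬ G.Adj a c) (had : ¬ G.Adj a d) (hbd : ¬ G.Adj b d) (hbe : ¬ G.Adj b e)
    (hce : ¬ G.Adj c e)
    (hac' : a ≠ c) (had' : a ≠ d) (hbd' : b ≠ d) (hbe' : b ≠ e) (hce' : c ≠ e) :
    ¬ CycleFree G 5 := by
  intro h
  have := hab.ne; have := hbc.ne; have := hcd.ne; have := hde.ne; have := hea.ne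
  have hca := mt G.adj_symm hac; have hda := mt G.adj_symm had; have hdb := mt G.adj_symm hbd
  have heb := mt G.adj_symm hbe; have hec := mt G.adj_symm hce
  refine h.elim ⟨⟨![a, b, c, d, e], ?_⟩, ?_⟩
  · intro i j hij
    fin_cases i <;> fin_cases j <;> simp_all
  · intro i j
    change G.Adj (![a, b, c, d, e] i) (![a, b, c, d, e] j) ↔ _
    fin_cases i <;> fin_cases j <;>
      simp [cycleGraph_adj, hab, hbc, hcd, hde, hea, hac, had, hbd, hbe, hce, hca, hda, hdb, heb,
        hec, hab.symm, hbc.symm, hcd.symm, hde.symm, hea.symm] <;> decide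

lemma mem_closedNbhd_iff : v ∈ closedNbhd G x ↔ v = x ∨ G.Adj x v := Iff.rfl

lemma notMem_closedNbhdSet (hI : I ⊆ (closedNbhd G x)ᶜ) : x ∉ closedNbhdSet G I := by
  rintro (hx | ⟨u, hu, hux⟩)
  · exact hI hx (Or.inl rfl)
  · exact hI hu (Or.inr hux.symm)

lemma exists_adj_of_mem_neighborSet_inter_closedNbhdSet (hI : I ⊆ (closedNbhd G x)ᶜ)
    (hv : v ∈ G.neighborSet x ∩ closedNbhdSet G I) : ∃ u ∈ I, G.Adj u v := by
  obtain ⟨hxv, hvI | hv⟩ := hv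
  · exact absurd (Or.inr hxv) (hI hvI)
  · exact hv

lemma Codominated.exists_adj_notMem_closedNbhdSet (hc : Codominated G x)
    (hI : I ⊆ (closedNbhd G x)ᶜ) : ∃ v, v ∉ closedNbhdSet G I ∧ G.Adj x v := by
  obtain ⟨y, hyx, hy⟩ := hc
  have hxy : G.Adj x y := (hy (Or.inl rfl)).resolve_left hyx
  refine ⟨y, ?_, hxy⟩
  rintro (hyI | ⟨u, hu, huy⟩)
  · exact hI hyI (Or.inr hxy)
  · exact hI hu (hy (Or.inr huy.symm))

lemma exists_adj_notMem_closedNbhd (hnc : ¬ Codominated G x) (hxv : G.Adj x v) :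
    ∃ z, G.Adj v z ∧ z ∉ closedNbhd G x := by
  obtain ⟨z, hzv, hzx⟩ := Set.not_subset.mp fun h => hnc ⟨v, hxv.ne', h⟩
  refine ⟨z, (mem_closedNbhd_iff.mp hzv).resolve_left ?_, hzx⟩
  rintro rfl
  exact hzx (Or.inr hxv)

lemma IsIndep.insert_diff_neighborSet (hS : IsIndep G S) (z : V) :
    IsIndep G (insert z (S \ G.neighborSet z)) := by
  rintro a (rfl | ⟨ha, haz⟩) b (rfl | ⟨hb, hbz⟩)
  · exact G.irrefl
  · exact hbz
  · exact fun h => haz h.symm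
  · exact hS ha hb

lemma neighborSet_inter_closedNbhdSet_subset (h4 : CycleFree G 4) (h5 : CycleFree G 5)
    (hS : S ⊆ (closedNbhd G x)ᶜ) (hxv : G.Adj x v) (hvS : v ∉ closedNbhdSet G S)
    (hvz : G.Adj v z) (hzx : z ∉ closedNbhd G x) :
    G.neighborSet x ∩ closedNbhdSet G S ⊆ closedNbhdSet G (insert z (S \ G.neighborSet z)) := by
  intro w hw
  have hxw : G.Adj x w := hw.1
  obtain ⟨u, huS, huw⟩ := exists_adj_of_mem_neighborSet_inter_closedNbhdSet hS hw
  by_cases hzu : G.Adj z u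
  swap
  · exact Or.inr ⟨u, Or.inr ⟨huS, hzu⟩, huw⟩
  by_cases hzw : G.Adj z w
  · exact Or.inr ⟨z, Or.inl rfl, hzw⟩
  exfalso
  have hux : u ∉ closedNbhd G x := hS huS
  have hvu : ¬ G.Adj v u := fun h => hvS (Or.inr ⟨u, huS, h.symm⟩)
  have hvu' : v ≠ u := by rintro rfl; exact hux (Or.inr hxv)
  have hzw' : z ≠ w := by rintro rfl; exact hzx (Or.inr hxw)
  by_cases hvw : G.Adj v w
  · exact not_cycleFree_four hvz hzu huw hvw.symm hvu hzw hvu' hzw' h4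
  · have hvw' : v ≠ w := by rintro rfl; exact hvS (Or.inr ⟨u, huS, huw⟩)
    exact not_cycleFree_five hxv hvz hzu huw hxw.symm
      (fun h => hzx (Or.inr h)) (fun h => hux (Or.inr h)) hvu hvw hzw
      (fun h => hzx (Or.inl h.symm)) (fun h => hux (Or.inl h.symm)) hvu' hvw' hzw' h5

lemma exists_isIndep_neighborSet_inter_closedNbhdSet_ssubset (hnc : ¬ Codominated G x)
    (h4 : CycleFree G 4) (h5 : CycleFree G 5) (hS : S ⊆ (closedNbhd G x)ᶜ) (hSi : IsIndep G S)
    (hxv : G.Adj x v) (hvS : v ∉ closedNbhdSet G S) :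
    ∃ T ⊆ (closedNbhd G x)ᶜ, IsIndep G T ∧
      G.neighborSet x ∩ closedNbhdSet G S ⊂ G.neighborSet x ∩ closedNbhdSet G T := by
  obtain ⟨z, hvz, hzx⟩ := exists_adj_notMem_closedNbhd hnc hxv
  refine ⟨insert z (S \ G.neighborSet z), ?_, hSi.insert_diff_neighborSet z, ?_⟩
  · rintro a (rfl | ⟨ha, -⟩)
    exacts [hzx, hS ha]
  · refine Set.ssubset_iff_subset_ne.mpr ⟨fun w hw =>
      ⟨hw.1, neighborSet_inter_closedNbhdSet_subset h4 h5 hS hxv hvS hvz hzx hw⟩, ?_⟩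
    intro h
    have hv : v ∈ G.neighborSet x ∩ closedNbhdSet G (insert z (S \ G.neighborSet z)) :=
      ⟨hxv, Or.inr ⟨z, Or.inl rfl, hvz.symm⟩⟩
    exact hvS (h ▸ hv).2

lemma exists_isIndep_neighborSet_subset_closedNbhdSet [Finite V] (hnc : ¬ Codominated G x)
    (h4 : CycleFree G 4) (h5 : CycleFree G 5) :
    ∃ I ⊆ (closedNbhd G x)ᶜ, IsIndep G I ∧ G.neighborSet x ⊆ closedNbhdSet G I := by
  obtain ⟨I, ⟨hI, hIi⟩, hmax⟩ :=
    Set.Finite.exists_maximalFor (fun S => G.neighborSet x ∩ closedNbhdSet G S)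
      {S | S ⊆ (closedNbhd G x)ᶜ ∧ IsIndep G S} (Set.toFinite _)
      ⟨∅, Set.empty_subset _, fun _ h => h.elim⟩
  refine ⟨I, hI, hIi, fun v hxv => by_contra fun hvI => ?_⟩
  obtain ⟨T, hT, hTi, hlt⟩ :=
    exists_isIndep_neighborSet_inter_closedNbhdSet_ssubset hnc h4 h5 hI hIi hxv hvI
  exact hlt.not_subset (hmax ⟨hT, hTi⟩ hlt.subset)

end CodominatedIff

theorem codominated_iff_no_isolating_indep_general [Fintype V] (G : SimpleGraph V)
    (h4 : CycleFree G 4) (h5 : CycleFree G 5) (x : V) :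
    Codominated G x ↔
      ¬ ∃ I : Set V, I ⊆ (closedNbhd G x)ᶜ ∧ IsIndep G I ∧
        x ∉ closedNbhdSet G I ∧ ∀ v ∉ closedNbhdSet G I, ¬ G.Adj x v := by
  constructor
  · rintro hc ⟨I, hI, -, -, hiso⟩
    obtain ⟨v, hvI, hxv⟩ := hc.exists_adj_notMem_closedNbhdSet hI
    exact hiso v hvI hxv
  · intro hno
    by_contra hnc
    obtain ⟨I, hI, hIi, hN⟩ := exists_isIndep_neighborSet_subset_closedNbhdSet hnc h4 h5
    exact hno ⟨I, hI, hIi, notMem_closedNbhdSet hI, fun v hvI hxv => hvI (hN hxv)⟩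

/-- in a `(C4,C5)`-free well-covered graph, `x` is codominated iff
there is no independent set `I` of `G - N[x]` such that `x` is isolated in
`G - N[I]`. -/
theorem codominated_iff_no_isolating_indep [Fintype V] (G : SimpleGraph V)
    (h4 : CycleFree G 4) (h5 : CycleFree G 5) (hwc : WellCovered G) (x : V) :
    Codominated G x ↔
      ¬ ∃ I : Set V, I ⊆ (closedNbhd G x)ᶜ ∧ IsIndep G I ∧
        x ∉ closedNbhdSet G I ∧ ∀ v ∉ closedNbhdSet G I, ¬ G.Adj x v :=
  codominated_iff_no_isolating_indep_general G h4 h5 x
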